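/- For any Lagrangian subspaces Λ1, Π, Λ2 of a symplectic vector space Σ of dimension 2n, the Kashiwara index and the positive Maslov index are related by −Ki(Λ1, Π, Λ2) + 2·ind_Π(Λ1, Λ2) + dim(Λ1 ∩ Λ2) = n. -/

import Mathlib

open Module Submodule

/-- The skew-orthogonal complement (with respect to a bilinear form `σ`)
of a subspace `Γ`: all vectors `x` with `σ x y = 0` for all `y ∈ Γ`. -/
def skewCompl {E : Type*} [AddCommGroup E] [Module ℝ E]
    (σ : E →ₗ[ℝ] E →ₗ[ℝ] ℝ) (Γ : Submodule ℝ E) : Submodule ℝ E where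
  carrier := {x | ∀ y ∈ Γ, σ x y = 0}
  zero_mem' := by intro y hy; simp
  add_mem' := by
    intro a b ha hb y hy
    have h1 := ha y hy
    have h2 := hb y hy
    simp only [map_add, LinearMap.add_apply]
    rw [h1, h2, add_zero]
  smul_mem' := by
    intro c a ha y hy
    have h1 := ha y hy
    simp only [map_smul, LinearMap.smul_apply, smul_eq_mul]
    rw [h1, mul_zero]

/-- A subspace is Lagrangian if it coincides with its skew-orthogonal complement. -/
def IsLagrangian {E : Type*} [AddCommGroup E] [Module ℝ E]
    (σ : E →ₗ[ℝ] E →ₗ[ℝ] ℝ) (Λ : Submodule ℝ E) : Prop :=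
  Λ = skewCompl σ Λ

/-- The positive inertia index of the quadratic form `q` on `(Λ1 + Λ2) ∩ P` given by
`q (λ1 + λ2) = σ λ1 λ2` (`λi ∈ Λi`). -/
noncomputable def posIndPair {E : Type*} [AddCommGroup E] [Module ℝ E]
    (σ : E →ₗ[ℝ] E →ₗ[ℝ] ℝ) (P Λ1 Λ2 : Submodule ℝ E) : ℕ :=
  sSup {k | ∃ W : Submodule ℝ E, W ≤ (Λ1 ⊔ Λ2) ⊓ P ∧
    (∀ x ∈ W, x ≠ 0 → ∀ x1 ∈ Λ1, ∀ x2 ∈ Λ2, x = x1 + x2 → 0 < σ x1 x2) ∧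
    Module.finrank ℝ W = k}

/-- The negative inertia index of the same quadratic form. -/
noncomputable def negIndPair {E : Type*} [AddCommGroup E] [Module ℝ E]
    (σ : E →ₗ[ℝ] E →ₗ[ℝ] ℝ) (P Λ1 Λ2 : Submodule ℝ E) : ℕ :=
  sSup {k | ∃ W : Submodule ℝ E, W ≤ (Λ1 ⊔ Λ2) ⊓ P ∧
    (∀ x ∈ W, x ≠ 0 → ∀ x1 ∈ Λ1, ∀ x2 ∈ Λ2, x = x1 + x2 → σ x1 x2 < 0) ∧
    Module.finrank ℝ W = k}

/-- The positive Maslov index of the triple `(Λ1, P, Λ2)` of Lagrangian subspaces: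
`ind_P (Λ1, Λ2) = ind⁺ q + (dim (Λ1 ∩ P) + dim (Λ2 ∩ P)) / 2 - dim (Λ1 ∩ Λ2 ∩ P)`. -/
noncomputable def maslovInd {E : Type*} [AddCommGroup E] [Module ℝ E]
    (σ : E →ₗ[ℝ] E →ₗ[ℝ] ℝ) (P Λ1 Λ2 : Submodule ℝ E) : ℚ :=
  (posIndPair σ P Λ1 Λ2 : ℚ)
    + ((Module.finrank ℝ ↥(Λ1 ⊓ P) : ℚ) + (Module.finrank ℝ ↥(Λ2 ⊓ P) : ℚ)) / 2
    - (Module.finrank ℝ ↥(Λ1 ⊓ Λ2 ⊓ P) : ℚ)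

/-- The Kashiwara index of the triple `(Λ1, P, Λ2)`: the signature of the quadratic
form `q` on `(Λ1 + Λ2) ∩ P`. -/
noncomputable def kashiwara {E : Type*} [AddCommGroup E] [Module ℝ E]
    (σ : E →ₗ[ℝ] E →ₗ[ℝ] ℝ) (Λ1 P Λ2 : Submodule ℝ E) : ℤ :=
  (posIndPair σ P Λ1 Λ2 : ℤ) - (negIndPair σ P Λ1 Λ2 : ℤ)

/-! On `V = (Λ1 + Λ2) ∩ Π` the form `q` is a genuine quadratic form, so Sylvester's law of
inertia gives `ind⁺ q + ind⁻ q + dim rad q = dim V`. Its polar form is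
`(a + b, y) ↦ σ (a - b) y`, so `rad q` consists of the `a + b ∈ V` with
`a - b ∈ V^∠ = Λ1 ∩ Λ2 + Π`, and solving for `a` and `b` shows that this is
`Λ1 ∩ Π + Λ2 ∩ Π`. Counting dimensions of skew-orthogonal complements gives
`dim V + dim (Λ1 ∩ Λ2) = n + dim (Λ1 ∩ Λ2 ∩ Π)`, and the identity becomes linear arithmetic. -/

open QuadraticMap

section Symplectic

variable {E : Type*} [AddCommGroup E] [Module ℝ E] {σ : E →ₗ[ℝ] E →ₗ[ℝ] ℝ}

lemma skewCompl_sup (Γ₁ Γ₂ : Submodule ℝ E) :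
    skewCompl σ (Γ₁ ⊔ Γ₂) = skewCompl σ Γ₁ ⊓ skewCompl σ Γ₂ := by
  ext x
  refine ⟨fun h => ⟨fun y hy => h y (mem_sup_left hy), fun y hy => h y (mem_sup_right hy)⟩, ?_⟩
  rintro ⟨h₁, h₂⟩ y hy
  obtain ⟨y₁, hy₁, y₂, hy₂, rfl⟩ := mem_sup.mp hy
  rw [map_add, h₁ y₁ hy₁, h₂ y₂ hy₂, add_zero]

lemma skewCompl_eq_orthogonal (hσ : σ.IsAlt) (Γ : Submodule ℝ E) :
    skewCompl σ Γ = LinearMap.BilinForm.orthogonal σ Γ := by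
  ext x
  rw [LinearMap.BilinForm.mem_orthogonal_iff]
  exact ⟨fun h y hy => hσ.isRefl x y (h y hy), fun h y hy => hσ.isRefl y x (h y hy)⟩

variable [FiniteDimensional ℝ E] (hσ : σ.IsAlt) (hσ' : σ.SeparatingLeft)
include hσ hσ'

lemma finrank_add_finrank_skewCompl (Γ : Submodule ℝ E) :
    finrank ℝ Γ + finrank ℝ (skewCompl σ Γ) = finrank ℝ E := by
  rw [skewCompl_eq_orthogonal hσ, LinearMap.BilinForm.finrank_orthogonal
    (hσ.isRefl.nondegenerate_iff_separatingLeft.mpr hσ')]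
  have := Submodule.finrank_le Γ
  omega

lemma skewCompl_skewCompl (Γ : Submodule ℝ E) : skewCompl σ (skewCompl σ Γ) = Γ := by
  rw [skewCompl_eq_orthogonal hσ, skewCompl_eq_orthogonal hσ]
  exact LinearMap.BilinForm.orthogonal_orthogonal
    (hσ.isRefl.nondegenerate_iff_separatingLeft.mpr hσ') hσ.isRefl Γ

lemma skewCompl_inf (Γ₁ Γ₂ : Submodule ℝ E) :
    skewCompl σ (Γ₁ ⊓ Γ₂) = skewCompl σ Γ₁ ⊔ skewCompl σ Γ₂ := by
  conv_lhs => rw [← skewCompl_skewCompl hσ hσ' Γ₁, ← skewCompl_skewCompl hσ hσ' Γ₂,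
    ← skewCompl_sup, skewCompl_skewCompl hσ hσ']

lemma IsLagrangian.two_mul_finrank {Λ : Submodule ℝ E} (hΛ : IsLagrangian σ Λ) :
    2 * finrank ℝ Λ = finrank ℝ E := by
  have := finrank_add_finrank_skewCompl hσ hσ' Λ
  rw [← hΛ] at this
  omega

end Symplectic

lemma exists_linearMap_mem_and_sub_mem {K M : Type*} [DivisionRing K] [AddCommGroup M]
    [Module K M] (Λ₁ Λ₂ : Submodule K M) :
    ∃ π : M →ₗ[K] M, ∀ x ∈ Λ₁ ⊔ Λ₂, π x ∈ Λ₁ ∧ x - π x ∈ Λ₂ := by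
  set f := Λ₁.subtype.coprod Λ₂.subtype
  have hf : LinearMap.range f = Λ₁ ⊔ Λ₂ := by
    rw [LinearMap.range_coprod, range_subtype, range_subtype]
  obtain ⟨s, hs⟩ := f.rangeRestrict.exists_rightInverse_of_surjective f.range_rangeRestrict
  obtain ⟨π, hπ⟩ := LinearMap.exists_extend (Λ₁.subtype ∘ₗ LinearMap.fst K Λ₁ Λ₂ ∘ₗ s)
  refine ⟨π, fun x hx => ?_⟩
  rw [← hf] at hx
  have hsx : ((s ⟨x, hx⟩).1 : M) + (s ⟨x, hx⟩).2 = x :=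
    congrArg Subtype.val (LinearMap.congr_fun hs ⟨x, hx⟩)
  have hπx : π x = (s ⟨x, hx⟩).1 := LinearMap.congr_fun hπ ⟨x, hx⟩
  rw [hπx, ← eq_sub_of_add_eq' hsx]
  exact ⟨(s ⟨x, hx⟩).1.2, (s ⟨x, hx⟩).2.2⟩

section PairingForm

variable {E : Type*} [AddCommGroup E] [Module ℝ E] {σ : E →ₗ[ℝ] E →ₗ[ℝ] ℝ}

/-- The form `q` extended to all of `E` through a linear splitting `x ↦ (π x, x - π x)` of
`Λ₁ ⊔ Λ₂`; off `Λ₁ ⊔ Λ₂` its values depend on the chosen splitting. -/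
noncomputable def pairingForm (σ : E →ₗ[ℝ] E →ₗ[ℝ] ℝ) (Λ₁ Λ₂ : Submodule ℝ E) :
    QuadraticForm ℝ E :=
  let π := (exists_linearMap_mem_and_sub_mem Λ₁ Λ₂).choose
  LinearMap.BilinMap.toQuadraticMap ((σ ∘ₗ π).compl₂ (LinearMap.id - π))

variable {Λ₁ Λ₂ : Submodule ℝ E} (h₁ : Λ₁ ≤ skewCompl σ Λ₁) (h₂ : Λ₂ ≤ skewCompl σ Λ₂)
include h₁ h₂

/-- Two decompositions of the same vector differ by some `c ∈ Λ₁ ⊓ Λ₂`, which pairs trivially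
with both summands. -/
lemma apply_eq_apply_of_add_eq {a a' b b' : E} (ha : a ∈ Λ₁) (ha' : a' ∈ Λ₁) (hb : b ∈ Λ₂)
    (hb' : b' ∈ Λ₂) (h : a + b = a' + b') : σ a b = σ a' b' := by
  have hb'_eq : b' = a + b - a' := eq_sub_of_add_eq' h.symm
  obtain ⟨c, hc₁, hc₂, rfl, rfl⟩ : ∃ c ∈ Λ₁, c ∈ Λ₂ ∧ a' = a - c ∧ b' = b + c := by
    refine ⟨a - a', sub_mem ha ha', ?_, (sub_sub_cancel a a').symm, by rw [hb'_eq]; abel⟩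
    rw [show a - a' = b' - b by rw [hb'_eq]; abel]
    exact sub_mem hb' hb
  rw [map_sub, LinearMap.sub_apply, map_add, map_add, h₁ ha c hc₁, h₂ hc₂ b hb, h₁ hc₁ c hc₁]
  simp

lemma pairingForm_add_apply {a b : E} (ha : a ∈ Λ₁) (hb : b ∈ Λ₂) :
    pairingForm σ Λ₁ Λ₂ (a + b) = σ a b := by
  obtain ⟨hπ₁, hπ₂⟩ := (exists_linearMap_mem_and_sub_mem Λ₁ Λ₂).choose_spec (a + b)
    (add_mem_sup ha hb)
  simp only [pairingForm, LinearMap.BilinMap.toQuadraticMap_apply, LinearMap.compl₂_apply,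
    LinearMap.comp_apply, LinearMap.sub_apply, LinearMap.id_apply]
  exact apply_eq_apply_of_add_eq h₁ h₂ hπ₁ ha hπ₂ hb (add_sub_cancel _ _)

lemma forall_add_eq_imp_iff_pairingForm {x : E} (hx : x ∈ Λ₁ ⊔ Λ₂) (p : ℝ → Prop) :
    (∀ x₁ ∈ Λ₁, ∀ x₂ ∈ Λ₂, x = x₁ + x₂ → p (σ x₁ x₂)) ↔ p (pairingForm σ Λ₁ Λ₂ x) := by
  obtain ⟨a, ha, b, hb, rfl⟩ := mem_sup.mp hx
  rw [pairingForm_add_apply h₁ h₂ ha hb]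
  refine ⟨fun h => h a ha b hb rfl, ?_⟩
  rintro h x₁ hx₁ x₂ hx₂ hx
  rwa [← apply_eq_apply_of_add_eq h₁ h₂ ha hx₁ hb hx₂ hx]

lemma polar_pairingForm_add (hσ : σ.IsAlt) {a b y : E} (ha : a ∈ Λ₁) (hb : b ∈ Λ₂)
    (hy : y ∈ Λ₁ ⊔ Λ₂) : polar (pairingForm σ Λ₁ Λ₂) (a + b) y = σ (a - b) y := by
  obtain ⟨c, hc, d, hd, rfl⟩ := mem_sup.mp hy
  have hsum : a + b + (c + d) = (a + c) + (b + d) := add_add_add_comm a b c d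
  rw [polar, hsum, pairingForm_add_apply h₁ h₂ ha hb, pairingForm_add_apply h₁ h₂ hc hd,
    pairingForm_add_apply h₁ h₂ (add_mem ha hc) (add_mem hb hd)]
  have hac := h₁ ha c hc
  have hbd := h₂ hb d hd
  have hcb := hσ.neg c b
  simp only [map_add, map_sub, LinearMap.add_apply, LinearMap.sub_apply]
  linarith

end PairingForm

lemma sSup_finrank_posDef_eq_sigPos {𝕜 M : Type*} [Field 𝕜] [LinearOrder 𝕜]
    [IsStrictOrderedRing 𝕜] [AddCommGroup M] [Module 𝕜 M] [FiniteDimensional 𝕜 M]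
    (Q : QuadraticForm 𝕜 M) (V : Submodule 𝕜 M) :
    sSup {k | ∃ W : Submodule 𝕜 M, W ≤ V ∧ (∀ x ∈ W, x ≠ 0 → 0 < Q x) ∧ finrank 𝕜 W = k}
      = sigPos (Q.restrict V) := by
  refine IsGreatest.csSup_eq ⟨?_, ?_⟩
  · obtain ⟨U, hU, hUpos⟩ := exists_finrank_eq_sigPos_and_posDef (Q.restrict V)
    refine ⟨U.map V.subtype, map_subtype_le V U, ?_, by rw [finrank_map_subtype_eq, hU]⟩
    rintro _ ⟨u, hu, rfl⟩ hu0
    exact hUpos ⟨u, hu⟩ (by simpa using hu0)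
  · rintro _ ⟨W, hWV, hWpos, rfl⟩
    have hW : (W.comap V.subtype).map V.subtype = W := by
      rw [map_comap_subtype, inf_eq_right.mpr hWV]
    rw [← hW, finrank_map_subtype_eq]
    refine le_sigPos_of_posDef _ fun u hu0 => hWpos _ u.2 ?_
    simpa using hu0

section Triple

variable {E : Type*} [AddCommGroup E] [Module ℝ E] {σ : E →ₗ[ℝ] E →ₗ[ℝ] ℝ}
  {P Λ₁ Λ₂ : Submodule ℝ E}

lemma posIndPair_eq_sigPos [FiniteDimensional ℝ E] (h₁ : Λ₁ ≤ skewCompl σ Λ₁)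
    (h₂ : Λ₂ ≤ skewCompl σ Λ₂) :
    posIndPair σ P Λ₁ Λ₂
      = sigPos ((pairingForm σ Λ₁ Λ₂).restrict ((Λ₁ ⊔ Λ₂) ⊓ P)) := by
  rw [posIndPair, ← sSup_finrank_posDef_eq_sigPos]
  congr 1; ext k
  refine exists_congr fun W => and_congr_right fun hWV => and_congr_left' <|
    forall₂_congr fun x hx => imp_congr_right fun _ => ?_
  exact forall_add_eq_imp_iff_pairingForm h₁ h₂ (hWV hx).1 _

lemma negIndPair_eq_sigNeg [FiniteDimensional ℝ E] (h₁ : Λ₁ ≤ skewCompl σ Λ₁)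
    (h₂ : Λ₂ ≤ skewCompl σ Λ₂) :
    negIndPair σ P Λ₁ Λ₂
      = sigNeg ((pairingForm σ Λ₁ Λ₂).restrict ((Λ₁ ⊔ Λ₂) ⊓ P)) := by
  rw [negIndPair, ← sigPos_neg, show -(pairingForm σ Λ₁ Λ₂).restrict _
    = (-pairingForm σ Λ₁ Λ₂).restrict ((Λ₁ ⊔ Λ₂) ⊓ P) from rfl,
    ← sSup_finrank_posDef_eq_sigPos]
  congr 1; ext k
  refine exists_congr fun W => and_congr_right fun hWV => and_congr_left' <|
    forall₂_congr fun x hx => imp_congr_right fun _ => ?_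
  rw [forall_add_eq_imp_iff_pairingForm h₁ h₂ (hWV hx).1 (· < 0), neg_apply, neg_pos]

/-- Solving `a + b = x`, `a - b = d + p` gives `a = (x + p + d) / 2` and `b = (x - p - d) / 2`. -/
lemma add_mem_inf_sup_inf {a b : E} (ha : a ∈ Λ₁) (hb : b ∈ Λ₂) (hP : a + b ∈ P)
    (hab : a - b ∈ (Λ₁ ⊓ Λ₂) ⊔ P) : a + b ∈ (Λ₁ ⊓ P) ⊔ (Λ₂ ⊓ P) := by
  obtain ⟨d, ⟨hd₁, hd₂⟩, p, hp, hdp⟩ := mem_sup.mp hab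
  have hd : d = a - b - p := eq_sub_of_add_eq hdp
  have ha' : a - (2⁻¹ : ℝ) • d = (2⁻¹ : ℝ) • (a + b + p) := by rw [hd]; module
  have hb' : b + (2⁻¹ : ℝ) • d = (2⁻¹ : ℝ) • (a + b - p) := by rw [hd]; module
  refine mem_sup.mpr ⟨a - (2⁻¹ : ℝ) • d, ⟨sub_mem ha (smul_mem _ _ hd₁), ?_⟩,
    b + (2⁻¹ : ℝ) • d, ⟨add_mem hb (smul_mem _ _ hd₂), ?_⟩, by abel⟩
  · exact ha' ▸ smul_mem P _ (add_mem hP hp)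
  · exact hb' ▸ smul_mem P _ (sub_mem hP hp)

variable [FiniteDimensional ℝ E] (hσ : σ.IsAlt) (hσ' : σ.SeparatingLeft)
  (hP : IsLagrangian σ P) (hΛ₁ : IsLagrangian σ Λ₁) (hΛ₂ : IsLagrangian σ Λ₂)
include hσ hσ' hP hΛ₁ hΛ₂

lemma skewCompl_sup_inf :
    skewCompl σ ((Λ₁ ⊔ Λ₂) ⊓ P) = (Λ₁ ⊓ Λ₂) ⊔ P := by
  rw [skewCompl_inf hσ hσ', skewCompl_sup, ← hΛ₁, ← hΛ₂, ← hP]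

lemma map_subtype_radical_pairingForm :
    ((pairingForm σ Λ₁ Λ₂).restrict ((Λ₁ ⊔ Λ₂) ⊓ P)).radical.map ((Λ₁ ⊔ Λ₂) ⊓ P).subtype
      = (Λ₁ ⊓ P) ⊔ (Λ₂ ⊓ P) := by
  set V := (Λ₁ ⊔ Λ₂) ⊓ P
  have hmem : ∀ x, x ∈ ((pairingForm σ Λ₁ Λ₂).restrict V).radical.map V.subtype ↔
      x ∈ V ∧ ∀ y ∈ V, polar (pairingForm σ Λ₁ Λ₂) x y = 0 := by
    intro x
    simp only [radical_eq_ker_polarBilin, mem_map, LinearMap.mem_ker, LinearMap.ext_iff,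
      polarBilin_apply_apply, LinearMap.zero_apply, Subtype.forall, subtype_apply,
      Subtype.exists, exists_and_right, exists_eq_right]
    exact ⟨fun ⟨hx, h⟩ => ⟨hx, h⟩, fun ⟨hx, h⟩ => ⟨hx, h⟩⟩
  ext x
  rw [hmem]
  constructor
  · rintro ⟨hxV, hx⟩
    obtain ⟨a, ha, b, hb, rfl⟩ := mem_sup.mp hxV.1
    refine add_mem_inf_sup_inf ha hb hxV.2 ?_
    rw [← skewCompl_sup_inf hσ hσ' hP hΛ₁ hΛ₂]
    intro y hy
    rw [← polar_pairingForm_add (Eq.le hΛ₁) (Eq.le hΛ₂) hσ ha hb hy.1]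
    exact hx y hy
  · intro hx
    obtain ⟨a, ⟨ha, haP⟩, b, ⟨hb, hbP⟩, rfl⟩ := mem_sup.mp hx
    refine ⟨⟨add_mem_sup ha hb, add_mem haP hbP⟩, fun y hy => ?_⟩
    rw [polar_pairingForm_add (Eq.le hΛ₁) (Eq.le hΛ₂) hσ ha hb hy.1]
    exact (Eq.le hP) (sub_mem haP hbP) y hy.2

lemma finrank_sup_inf_add_finrank_inf :
    finrank ℝ ↥((Λ₁ ⊔ Λ₂) ⊓ P) + finrank ℝ ↥(Λ₁ ⊓ Λ₂)
      = finrank ℝ P + finrank ℝ ↥(Λ₁ ⊓ Λ₂ ⊓ P) := by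
  have h₁₂ := finrank_sup_add_finrank_inf_eq Λ₁ Λ₂
  have hV := finrank_sup_add_finrank_inf_eq (Λ₁ ⊔ Λ₂) P
  have h₁₂P := finrank_add_finrank_skewCompl hσ hσ' (Λ₁ ⊔ Λ₂ ⊔ P)
  rw [skewCompl_sup, skewCompl_sup, ← hΛ₁, ← hΛ₂, ← hP] at h₁₂P
  have := hΛ₁.two_mul_finrank hσ hσ'
  have := hΛ₂.two_mul_finrank hσ hσ'
  omega

end Triple

theorem stmt_14 {E : Type*} [AddCommGroup E] [Module ℝ E] [FiniteDimensional ℝ E]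
    {n : ℕ} (σ : E →ₗ[ℝ] E →ₗ[ℝ] ℝ)
    (halt : ∀ x : E, σ x x = 0)
    (hnondeg : ∀ x : E, (∀ y : E, σ x y = 0) → x = 0)
    (hdim : Module.finrank ℝ E = 2 * n)
    (P Λ1 Λ2 : Submodule ℝ E)
    (hP : IsLagrangian σ P) (hΛ1 : IsLagrangian σ Λ1) (hΛ2 : IsLagrangian σ Λ2) :
    -(kashiwara σ Λ1 P Λ2 : ℚ) + 2 * maslovInd σ P Λ1 Λ2
      + (Module.finrank ℝ ↥(Λ1 ⊓ Λ2) : ℚ) = (n : ℚ) := by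
  set V := (Λ1 ⊔ Λ2) ⊓ P
  set Q := (pairingForm σ Λ1 Λ2).restrict V
  have hinertia : sigPos Q + sigNeg Q + finrank ℝ Q.radical = finrank ℝ V :=
    QuadraticForm.sigPos_add_sigNeg_add_radical
  have hradical : finrank ℝ Q.radical + finrank ℝ ↥(Λ1 ⊓ Λ2 ⊓ P)
      = finrank ℝ ↥(Λ1 ⊓ P) + finrank ℝ ↥(Λ2 ⊓ P) := by
    rw [← finrank_map_subtype_eq, map_subtype_radical_pairingForm halt hnondeg hP hΛ1 hΛ2,
      inf_inf_distrib_right, finrank_sup_add_finrank_inf_eq]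
  have hV := finrank_sup_inf_add_finrank_inf halt hnondeg hP hΛ1 hΛ2
  have hPn : finrank ℝ P = n := by
    have := hP.two_mul_finrank halt hnondeg
    omega
  rw [kashiwara, maslovInd, posIndPair_eq_sigPos (Eq.le hΛ1) (Eq.le hΛ2),
    negIndPair_eq_sigNeg (Eq.le hΛ1) (Eq.le hΛ2)]
  qify at hinertia hradical hV hPn
  push_cast
  linarith
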